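/- Corollary (shift covariance of the energy function): with the notation of the previous item, the energy function E_Y(z) := det[v_i^{−j}(v_i+1)^{y_j+j}]_{i,j=1}^N / det[v_i^{−j}]_{i,j=1}^N, evaluated on the right Bethe roots {v_1,…,v_N} = R_z, satisfies E_{Ŷ}(z) = E_Y(z) · (−1)^{k(N−k)} z^{−kL} ∏_{v∈R_z} v^k (v+1)^{−k+c}. -/

import Mathlib

/-!
Column `j` of the matrix of `Ŷ` is column `j + k` (mod `N`) of the matrix of `Y`, times the row
factor `v^k (v+1)^(c-k)`; when the index wraps around there is an extra factor
`v^(-N) (v+1)^(-(L-N))`, which is `z^(-L)` by the Bethe equation. Hence the numerator picks up the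
row factors, `z^(-kL)` from the `k` wrapped columns, and the sign `(-1)^(k(N-k))` of the `k`-th
power of an `N`-cycle, while the denominator does not change.
-/

open Equiv

theorem coe_finRotate_pow_apply {n : ℕ} (k : ℕ) (j : Fin n) :
    ((finRotate n ^ k) j : ℕ) = (j + k) % n := by
  have := j.neZero
  induction k with
  | zero => simp [Nat.mod_eq_of_lt j.isLt]
  | succ k ih =>
    rw [pow_succ', Perm.mul_apply, finRotate_apply, Fin.val_add, ih, Fin.val_one', ← Nat.add_mod,
      ← add_assoc]

theorem zpow_mul_zpow_eq_shift {K : Type*} [Field K] {a b : K} (ha : a ≠ 0) (hb : b ≠ 0)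
    {j j' k n l y y' c : ℤ} (m : ℕ) (hj : j' = j + k - m * n) (hy : y' = y - m * l + c) :
    a ^ (-j - 1) * b ^ (y' + j + 1) =
      a ^ k * b ^ (c - k) * ((a ^ n * b ^ (l - n))⁻¹ ^ m * (a ^ (-j' - 1) * b ^ (y + j' + 1))) := by
  rw [inv_pow, ← zpow_natCast, ← zpow_neg, mul_zpow, ← zpow_mul, ← zpow_mul,
    show -j - 1 = k + n * -m + (-j' - 1) by subst hj; ring,
    show y' + j + 1 = c - k + (l - n) * -m + (y + j' + 1) by subst hj hy; ring,
    zpow_add₀ ha, zpow_add₀ ha, zpow_add₀ hb (c - k + _), zpow_add₀ hb (c - k)]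
  ring

theorem sign_finRotate_pow {n k : ℕ} (hk : k ≤ n) :
    Perm.sign (finRotate n ^ k) = (-1) ^ (k * (n - k)) := by
  have hexp : (n - 1) * k = k * (n - k) + k * (k - 1) := by
    obtain ⟨m, rfl⟩ := Nat.exists_eq_add_of_le hk
    rcases k with _ | k
    · simp
    · rw [Nat.add_sub_cancel_left, show k + 1 + m - 1 = k + m by omega, Nat.add_sub_cancel]
      ring
  rw [map_pow, sign_finRotate, ← pow_mul, hexp, pow_add, (Nat.even_mul_pred_self k).neg_one_pow,
    mul_one]

theorem prod_ite_add_lt {M : Type*} [CommMonoid M] {n k : ℕ} (hk : k ≤ n) (w : M) :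
    ∏ j : Fin n, (if (j : ℕ) + k < n then 1 else w) = w ^ k := by
  rw [Fin.prod_univ_eq_prod_range (fun j => if j + k < n then 1 else w), ← Nat.sub_add_cancel hk,
    Finset.prod_range_add, Finset.prod_eq_one fun j hj => if_pos (by simp at hj; omega)]
  simp

open Matrix in
theorem det_of_mul_mul_apply_perm {n R : Type*} [Fintype n] [DecidableEq n] [CommRing R]
    (A : Matrix n n R) (r w : n → R) (σ : Perm n) :
    det (of fun i j => r i * (w j * A i (σ j))) = (∏ i, r i) * (∏ j, w j) * Perm.sign σ * det A :=
  calc det (of fun i j => r i * (w j * A i (σ j)))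
      = (∏ i, r i) * det (of fun i j => w j * A.submatrix id σ i j) := det_mul_column r _
    _ = (∏ i, r i) * ((∏ j, w j) * (Perm.sign σ * det A)) := by rw [det_mul_row, det_permute']
    _ = _ := by ring

/-- The `(k,c)`-shift `Ŷ` of `Y`, with 0-based indices. -/
def cyclicShift {N k : ℕ} (hk : k ≤ N) (L : ℕ) (c : ℤ) (y : Fin N → ℤ) : Fin N → ℤ := fun i =>
  if h : (i : ℕ) + k < N then y ⟨(i : ℕ) + k, h⟩ + c
  else y ⟨(i : ℕ) + k - N, by have := i.isLt; omega⟩ - L + c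

theorem zpow_mul_zpow_cyclicShift {K : Type*} [Field K] {N L k : ℕ} (hkN : k ≤ N)
    (hNL : N ≤ L) {a b w : K} (ha : a ≠ 0) (hb : b ≠ 0) (hw : a ^ N * b ^ (L - N) = w)
    (y : Fin N → ℤ) (c : ℤ) (j : Fin N) :
    a ^ (-(j : ℤ) - 1) * b ^ (cyclicShift hkN L c y j + j + 1) =
      a ^ k * b ^ (c - k) * ((if (j : ℕ) + k < N then 1 else w⁻¹) *
        (a ^ (-((finRotate N ^ k) j : ℤ) - 1) *
          b ^ (y ((finRotate N ^ k) j) + (finRotate N ^ k) j + 1))) := by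
  have hw' : a ^ (N : ℤ) * b ^ ((L : ℤ) - N) = w := by
    rw [← Nat.cast_sub hNL, zpow_natCast, zpow_natCast, hw]
  rw [← zpow_natCast a k, ← hw']
  by_cases h : (j : ℕ) + k < N
  · have hσ : (finRotate N ^ k) j = ⟨j + k, h⟩ :=
      Fin.ext (by rw [coe_finRotate_pow_apply, Nat.mod_eq_of_lt h])
    rw [cyclicShift, dif_pos h, if_pos h, hσ, ← pow_zero (a ^ (N : ℤ) * b ^ ((L : ℤ) - N))⁻¹]
    exact zpow_mul_zpow_eq_shift ha hb 0 (by push_cast; ring) (by push_cast; ring)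
  · have hσ : (finRotate N ^ k) j = ⟨j + k - N, by omega⟩ :=
      Fin.ext (by
        rw [coe_finRotate_pow_apply, Nat.mod_eq_sub_mod (by omega), Nat.mod_eq_of_lt (by omega)])
    rw [cyclicShift, dif_neg h, if_neg h, hσ, ← pow_one (a ^ (N : ℤ) * b ^ ((L : ℤ) - N))⁻¹]
    exact zpow_mul_zpow_eq_shift ha hb 1 (by push_cast [Nat.cast_sub (not_lt.mp h)]; ring)
      (by push_cast; ring)

/-- shift covariance of the energy function: with 0-based indices
(`y j` = paper's `y_{j+1}`, entries `v_i^{−j−1}(v_i+1)^{y_j+j+1}`), the energy function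
`E_Y(z) = det[v_i^{−j}(v_i+1)^{y_j+j}]/det[v_i^{−j}]` evaluated on the `N` distinct right
Bethe roots `R_z = {v_1,…,v_N}` satisfies
`E_{Ŷ}(z) = E_Y(z) · (−1)^{k(N−k)} z^{−kL} ∏_{v∈R_z} v^k (v+1)^{−k+c}`
for the `(k,c)`-shift `Ŷ` of `Y ∈ X_N(L)`. -/
theorem statement15 (N L : ℕ) (hNL : N < L) (z : ℂ) (v : Fin N → ℂ)
    (hv0 : ∀ i, v i ≠ 0) (hv1 : ∀ i, v i ≠ -1)
    (hBethe : ∀ i, (v i) ^ N * (v i + 1) ^ (L - N) = z ^ L)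
    (y : Fin N → ℤ) (k : ℕ) (hkN : k ≤ N) (c : ℤ) :
    let yhat : Fin N → ℤ := fun i =>
      if h : (i : ℕ) + k < N then y ⟨(i : ℕ) + k, h⟩ + c
      else y ⟨(i : ℕ) + k - N, by have := i.isLt; omega⟩ - L + c
    let E : (Fin N → ℤ) → ℂ := fun Y =>
      Matrix.det (Matrix.of fun i j : Fin N =>
          (v i) ^ (-(j : ℤ) - 1) * (v i + 1) ^ (Y j + (j : ℤ) + 1)) /
        Matrix.det (Matrix.of fun i j : Fin N => (v i) ^ (-(j : ℤ) - 1))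
    E yhat = E y * (-1) ^ (k * (N - k)) * z ^ (-((k * L : ℕ) : ℤ)) *
      ∏ i : Fin N, (v i) ^ k * (v i + 1) ^ ((c : ℤ) - k) := by
  intro yhat E
  have hcol : ∀ i j : Fin N, (v i) ^ (-(j : ℤ) - 1) * (v i + 1) ^ (yhat j + (j : ℤ) + 1) =
      (v i) ^ k * (v i + 1) ^ ((c : ℤ) - k) * ((if (j : ℕ) + k < N then 1 else (z ^ L)⁻¹) *
        Matrix.of (fun i j : Fin N => (v i) ^ (-(j : ℤ) - 1) * (v i + 1) ^ (y j + (j : ℤ) + 1))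
          i ((finRotate N ^ k) j)) := fun i j =>
    zpow_mul_zpow_cyclicShift hkN hNL.le (hv0 i) (fun h => hv1 i (eq_neg_of_add_eq_zero_left h))
      (hBethe i) y c j
  have hwrap : ((z ^ L)⁻¹) ^ k = z ^ (-((k * L : ℕ) : ℤ)) := by
    rw [inv_pow, ← pow_mul, zpow_neg, zpow_natCast, mul_comm L]
  simp only [E, hcol, det_of_mul_mul_apply_perm, prod_ite_add_lt hkN, sign_finRotate_pow hkN, hwrap]
  push_cast
  ring
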